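/- arXiv:1812.00939 — 9 statements merged into one kernel-verified Lean document; each statement's English description precedes it below -/
import Mathlib

section
/- Let X and Y be finite nonempty sets, ε ≥ 0, δ ∈ [0,1], and Φ ⊆ X×X. If a mechanism A : X → D(Y) provides (ε,δ)-differential privacy with respect to Φ, then A provides (ε, δ·|Φ|)-distribution privacy with respect to the lifted relation Φ#; that is, for every pair (λ0,λ1) ∈ Φ# and every R ⊆ Y, A#(λ0)[R] ≤ e^ε·A#(λ1)[R] + δ·|Φ|. -/
/-!
Common definitions: probability distributions on finite sets, mechanisms,
liftings, couplings, lifted relations, Wasserstein metric, privacy notions.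
-/

/-- `l` is a probability distribution on the finite set `X`. -/
def IsDist {X : Type*} [Fintype X] (l : X → ℝ) : Prop :=
  (∀ x, 0 ≤ l x) ∧ ∑ x, l x = 1

/-- `A` is a mechanism from `X` to `Y`: each `A x` is a distribution on `Y`. -/
def IsMech {X Y : Type*} [Fintype X] [Fintype Y] (A : X → Y → ℝ) : Prop :=
  ∀ x, IsDist (A x)

/-- Probability that a distribution `μ` assigns to a set `R`. -/
def probOf {Y : Type*} (μ : Y → ℝ) (R : Finset Y) : ℝ := ∑ y ∈ R, μ y

/-- The lifting `A#` of a mechanism `A`, applied to an input distribution `l`. -/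
def liftDist {X Y : Type*} [Fintype X] (A : X → Y → ℝ) (l : X → ℝ) : Y → ℝ :=
  fun y => ∑ x, l x * A x y

/-- `γ` is a coupling of `l0` and `l1`. -/
def IsCoupling {X : Type*} [Fintype X] (γ : X × X → ℝ) (l0 l1 : X → ℝ) : Prop :=
  IsDist γ ∧ (∀ x0, l0 x0 = ∑ x1, γ (x0, x1)) ∧ (∀ x1, l1 x1 = ∑ x0, γ (x0, x1))

/-- The lifted relation `Φ#` on distributions. -/
def liftRel {X : Type*} [Fintype X] (Φ : Finset (X × X)) (l0 l1 : X → ℝ) : Prop :=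
  IsDist l0 ∧ IsDist l1 ∧ ∃ γ, IsCoupling γ l0 l1 ∧ ∀ p, 0 < γ p → p ∈ Φ

/-- The largest move `max_{(x0,x1) ∈ supp γ} d x0 x1` of a coupling `γ`. -/
noncomputable def maxCost {X : Type*} (d : X → X → ℝ) (γ : X × X → ℝ) : ℝ :=
  sSup {r | ∃ p : X × X, 0 < γ p ∧ r = d p.1 p.2}

/-- The ∞-Wasserstein metric w.r.t. `d`. -/
noncomputable def Winf {X : Type*} [Fintype X] (d : X → X → ℝ) (l0 l1 : X → ℝ) : ℝ :=
  sInf {r | ∃ γ, IsCoupling γ l0 l1 ∧ maxCost d γ = r}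

/-- The relation `Φ#∞`: pairs of distributions admitting a coupling supported in `Φ`
that attains the ∞-Wasserstein metric. -/
def liftRelInf {X : Type*} [Fintype X] (d : X → X → ℝ) (Φ : Finset (X × X))
    (l0 l1 : X → ℝ) : Prop :=
  IsDist l0 ∧ IsDist l1 ∧
    ∃ γ, IsCoupling γ l0 l1 ∧ (∀ p, 0 < γ p → p ∈ Φ) ∧ maxCost d γ = Winf d l0 l1

/-- `d` is a metric on `X`. -/
structure IsMetric {X : Type*} (d : X → X → ℝ) : Prop where
  nonneg : ∀ x y, 0 ≤ d x y
  eq_zero_iff : ∀ x y, d x y = 0 ↔ x = y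
  symm : ∀ x y, d x y = d y x
  triangle : ∀ x y z, d x z ≤ d x y + d y z

/-- `(ε,δ)`-differential privacy of `A` w.r.t. the adjacency relation `Φ`. -/
def DP {X Y : Type*} (A : X → Y → ℝ) (Φ : Finset (X × X)) (ε δ : ℝ) : Prop :=
  ∀ p ∈ Φ, ∀ R : Finset Y, probOf (A p.1) R ≤ Real.exp ε * probOf (A p.2) R + δ

/-- `(ε,d,δ)`-extended differential privacy of `A` w.r.t. `Φ`. -/
def XDP {X Y : Type*} (A : X → Y → ℝ) (Φ : Finset (X × X)) (ε : ℝ)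
    (d : X → X → ℝ) (δ : ℝ) : Prop :=
  ∀ p ∈ Φ, ∀ R : Finset Y,
    probOf (A p.1) R ≤ Real.exp (ε * d p.1 p.2) * probOf (A p.2) R + δ

/-- `(ε,δ)`-distribution privacy of `M` w.r.t. a relation `Ψ` on distributions. -/
def DistP {X Z : Type*} [Fintype X] (M : X → Z → ℝ)
    (Ψ : (X → ℝ) → (X → ℝ) → Prop) (ε δ : ℝ) : Prop :=
  ∀ l0 l1, Ψ l0 l1 → ∀ R : Finset Z,
    probOf (liftDist M l0) R ≤ Real.exp ε * probOf (liftDist M l1) R + δ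

/-- `(ε,D,δ)`-extended distribution privacy of `M` w.r.t. `Ψ`. -/
def XDistP {X Z : Type*} [Fintype X] (M : X → Z → ℝ)
    (Ψ : (X → ℝ) → (X → ℝ) → Prop) (ε : ℝ) (D : (X → ℝ) → (X → ℝ) → ℝ) (δ : ℝ) : Prop :=
  ∀ l0 l1, Ψ l0 l1 → ∀ R : Finset Z,
    probOf (liftDist M l0) R ≤ Real.exp (ε * D l0 l1) * probOf (liftDist M l1) R + δ

/-- `(ε,δ)`-probabilistic distribution privacy of `M` w.r.t. `Ψ`. -/
def pDistP {X Z : Type*} [Fintype X] [DecidableEq Z] (M : X → Z → ℝ)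
    (Ψ : (X → ℝ) → (X → ℝ) → Prop) (ε δ : ℝ) : Prop :=
  ∀ l0 l1, Ψ l0 l1 → ∃ R' : Finset Z,
    probOf (liftDist M l0) R' ≤ δ ∧ probOf (liftDist M l1) R' ≤ δ ∧
    ∀ R : Finset Z,
      probOf (liftDist M l0) (R \ R') ≤ Real.exp ε * probOf (liftDist M l1) (R \ R') ∧
      probOf (liftDist M l1) (R \ R') ≤ Real.exp ε * probOf (liftDist M l0) (R \ R')

/-- The uniform distribution on a finite set `Y`. -/
noncomputable def uniformDist (Y : Type*) [Fintype Y] : Y → ℝ :=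
  fun _ => (Fintype.card Y : ℝ)⁻¹

/-- The `(k,ν,A)`-tupling mechanism from `X` to `Y^(k+1)`. -/
noncomputable def tupling {X Y : Type*} [Fintype Y] (k : ℕ) (ν : Y → ℝ) (A : X → Y → ℝ) :
    X → (Fin (k + 1) → Y) → ℝ :=
  fun x yb => ((k : ℝ) + 1)⁻¹ *
    ∑ i : Fin (k + 1), A x (yb i) * ∏ j ∈ Finset.univ.erase i, ν (yb j)

/-- The set of distributions `Λ_{β,η,A}`. -/
def Lam {X Y : Type*} [Fintype X] [Fintype Y] (β η : ℝ) (A : X → Y → ℝ)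
    (l : X → ℝ) : Prop :=
  IsDist l ∧ (1 - η) * (Fintype.card Y : ℝ) ≤ ({y : Y | liftDist A l y ≤ β}.ncard : ℝ)

/-- The product distribution `λ0 × λ1` on `X × X`. -/
def prodDist {X : Type*} (l0 l1 : X → ℝ) : X × X → ℝ := fun p => l0 p.1 * l1 p.2

/-- Sequential composition with shared input. -/
def compShared {X Y0 Y1 : Type*} [Fintype Y0] (A0 : X → Y0 → ℝ)
    (A1 : Y0 → X → Y1 → ℝ) : X → Y1 → ℝ :=
  fun x y1 => ∑ y0, A0 x y0 * A1 y0 x y1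

/-- Sequential composition with independent inputs. -/
def compInd {X Y0 Y1 : Type*} [Fintype Y0] (A0 : X → Y0 → ℝ)
    (A1 : Y0 → X → Y1 → ℝ) : X × X → Y1 → ℝ :=
  fun p y1 => ∑ y0, A0 p.1 y0 * A1 y0 p.2 y1

/-- Post-processing composition. -/
def postProc {X Y Z : Type*} [Fintype Y] (A0 : X → Y → ℝ) (A1 : Y → Z → ℝ) :
    X → Z → ℝ :=
  fun x z => ∑ y, A0 x y * A1 y z

/-- The point distribution at `x`. -/
def pointDist {X : Type*} [DecidableEq X] (x : X) : X → ℝ :=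
  fun x' => if x' = x then 1 else 0

/-- (ε,δ)-DP w.r.t. Φ implies (ε, δ·|Φ|)-DistP w.r.t. Φ#. -/
theorem dp_implies_distP {X Y : Type*} [Fintype X] [Fintype Y] [Nonempty X] [Nonempty Y]
    (ε δ : ℝ) (hε : 0 ≤ ε) (hδ0 : 0 ≤ δ) (hδ1 : δ ≤ 1)
    (Φ : Finset (X × X)) (A : X → Y → ℝ) (hA : IsMech A)
    (hDP : DP A Φ ε δ) :
    DistP A (liftRel Φ) ε (δ * (Φ.card : ℝ)) := by
  rintro l0 l1 ⟨hl0, hl1, γ, ⟨⟨hγ0, hγ1⟩, hm0, hm1⟩, hsupp⟩ R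
  -- rewrite lifted probs as sums over the coupling
  have h0 : probOf (liftDist A l0) R = ∑ p : X × X, γ p * probOf (A p.1) R := by
    unfold probOf liftDist
    rw [Finset.sum_comm]
    rw [Fintype.sum_prod_type]
    apply Finset.sum_congr rfl
    intro x _
    rw [← Finset.mul_sum, hm0 x, Finset.sum_mul]
  have h1 : probOf (liftDist A l1) R = ∑ p : X × X, γ p * probOf (A p.2) R := by
    unfold probOf liftDist
    rw [Finset.sum_comm]
    rw [Fintype.sum_prod_type_right]
    apply Finset.sum_congr rfl
    intro x _
    rw [← Finset.mul_sum, hm1 x, Finset.sum_mul]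
  -- Φ is nonempty
  have hne : ∃ p, 0 < γ p := by
    by_contra h
    push_neg at h
    have : ∑ p : X × X, γ p = 0 :=
      Finset.sum_eq_zero fun p _ => le_antisymm (h p) (hγ0 p)
    rw [hγ1] at this; norm_num at this
  obtain ⟨q, hq⟩ := hne
  have hcard : (1 : ℝ) ≤ (Φ.card : ℝ) := by
    have : q ∈ Φ := hsupp q hq
    have : 1 ≤ Φ.card := Finset.card_pos.mpr ⟨q, this⟩
    exact_mod_cast this
  have step : probOf (liftDist A l0) R ≤ Real.exp ε * probOf (liftDist A l1) R + δ := by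
    rw [h0, h1]
    calc ∑ p : X × X, γ p * probOf (A p.1) R
        ≤ ∑ p : X × X, γ p * (Real.exp ε * probOf (A p.2) R + δ) := by
          apply Finset.sum_le_sum
          intro p _
          rcases lt_or_eq_of_le (hγ0 p) with hp | hp
          · exact mul_le_mul_of_nonneg_left (hDP p (hsupp p hp) R) hp.le
          · rw [← hp]; simp
      _ = Real.exp ε * ∑ p : X × X, γ p * probOf (A p.2) R + δ := by
          simp_rw [mul_add]
          rw [Finset.sum_add_distrib, ← Finset.sum_mul, hγ1, one_mul, Finset.mul_sum]
          congr 1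
          exact Finset.sum_congr rfl fun p _ => by ring
  calc probOf (liftDist A l0) R
      ≤ Real.exp ε * probOf (liftDist A l1) R + δ := step
    _ ≤ Real.exp ε * probOf (liftDist A l1) R + δ * (Φ.card : ℝ) := by
        gcongr
        nlinarith
end

section
/- Let X and Y be finite nonempty sets, d a metric on X, ε ≥ 0, δ ∈ [0,1], and Φ ⊆ X×X. If a mechanism A : X → D(Y) provides (ε,d,δ)-extended differential privacy with respect to Φ, then A provides (ε, W∞, δ·|Φ|)-extended distribution privacy with respect to the relation Φ#∞; that is, for every pair (λ0,λ1) ∈ Φ#∞ and every R ⊆ Y, A#(λ0)[R] ≤ e^{ε·W∞(λ0,λ1)}·A#(λ1)[R] + δ·|Φ|, where W∞ is the ∞-Wasserstein metric with respect to d. -/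
/-! The coupling `γ` splits both output distributions into the same weighted sum over pairs
`(x0, x1)` in its support, and XDP compares the two sides pair by pair: every such pair lies
in `Φ` at distance at most `maxCost d γ = W∞(λ0, λ1)`. Summing, the additive errors add up to
`δ · ∑ γ = δ ≤ δ · |Φ|`, where `Φ` is nonempty because it contains the support of `γ`. -/

open Finset

theorem probOf_liftDist {X Y : Type*} [Fintype X] (A : X → Y → ℝ) (l : X → ℝ)
    (R : Finset Y) : probOf (liftDist A l) R = ∑ x, l x * probOf (A x) R := by
  simp only [probOf, liftDist, mul_sum]
  exact sum_comm

namespace IsCoupling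

variable {X Y : Type*} [Fintype X] {γ : X × X → ℝ} {l0 l1 : X → ℝ}

theorem exists_pos (hγ : IsCoupling γ l0 l1) : ∃ p, 0 < γ p := by
  by_contra! h
  have hzero : ∑ p, γ p = 0 := sum_eq_zero fun p _ => le_antisymm (h p) (hγ.1.1 p)
  rw [hγ.1.2] at hzero
  exact one_ne_zero hzero

theorem probOf_liftDist_fst (hγ : IsCoupling γ l0 l1) (A : X → Y → ℝ) (R : Finset Y) :
    probOf (liftDist A l0) R = ∑ p, γ p * probOf (A p.1) R := by
  simp only [probOf_liftDist, hγ.2.1, sum_mul, Fintype.sum_prod_type]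

theorem probOf_liftDist_snd (hγ : IsCoupling γ l0 l1) (A : X → Y → ℝ) (R : Finset Y) :
    probOf (liftDist A l1) R = ∑ p, γ p * probOf (A p.2) R := by
  simp only [probOf_liftDist, hγ.2.2, sum_mul, Fintype.sum_prod_type_right]

end IsCoupling

theorem le_maxCost {X : Type*} [Finite X] (d : X → X → ℝ) {γ : X × X → ℝ} {p : X × X}
    (hp : 0 < γ p) : d p.1 p.2 ≤ maxCost d γ := by
  refine le_csSup ?_ ⟨p, hp, rfl⟩
  refine ((Set.finite_range fun q : X × X => d q.1 q.2).subset ?_).bddAbove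
  rintro r ⟨q, -, rfl⟩
  exact ⟨q, rfl⟩

theorem XDP.probOf_liftDist_le {X Y : Type*} [Fintype X] [Fintype Y] {A : X → Y → ℝ}
    {Φ : Finset (X × X)} {ε δ : ℝ} {d : X → X → ℝ} (hA : IsMech A) (hε : 0 ≤ ε)
    (hXDP : XDP A Φ ε d δ) {γ : X × X → ℝ} {l0 l1 : X → ℝ} (hγ : IsCoupling γ l0 l1)
    (hsupp : ∀ p, 0 < γ p → p ∈ Φ) (R : Finset Y) :
    probOf (liftDist A l0) R ≤
      Real.exp (ε * maxCost d γ) * probOf (liftDist A l1) R + δ := by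
  set c := Real.exp (ε * maxCost d γ)
  have hpair : ∀ p, γ p * probOf (A p.1) R ≤ γ p * (c * probOf (A p.2) R + δ) := by
    intro p
    rcases (hγ.1.1 p).eq_or_lt with hp | hp
    · simp [← hp]
    refine mul_le_mul_of_nonneg_left ((hXDP p (hsupp p hp) R).trans ?_) hp.le
    have hexp : Real.exp (ε * d p.1 p.2) ≤ c :=
      Real.exp_le_exp.mpr (mul_le_mul_of_nonneg_left (le_maxCost d hp) hε)
    gcongr
    exact sum_nonneg fun y _ => (hA p.2).1 y
  calc probOf (liftDist A l0) R
      = ∑ p, γ p * probOf (A p.1) R := hγ.probOf_liftDist_fst A R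
    _ ≤ ∑ p, γ p * (c * probOf (A p.2) R + δ) := sum_le_sum fun p _ => hpair p
    _ = c * ∑ p, γ p * probOf (A p.2) R + δ * ∑ p, γ p := by
        simp only [mul_add, sum_add_distrib, mul_sum]
        congr 1 <;> exact sum_congr rfl fun p _ => by ring
    _ = c * probOf (liftDist A l1) R + δ := by
        rw [hγ.1.2, mul_one, hγ.probOf_liftDist_snd A R]

theorem xdp_implies_xdistP_general {X Y : Type*} [Fintype X] [Fintype Y]
    (d : X → X → ℝ)
    (ε δ : ℝ) (hε : 0 ≤ ε) (hδ0 : 0 ≤ δ)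
    (Φ : Finset (X × X)) (A : X → Y → ℝ) (hA : IsMech A)
    (hXDP : XDP A Φ ε d δ) :
    XDistP A (liftRelInf d Φ) ε (Winf d) (δ * (Φ.card : ℝ)) := by
  rintro l0 l1 ⟨-, -, γ, hγ, hsupp, hmax⟩ R
  obtain ⟨p, hp⟩ := hγ.exists_pos
  have hcard : 1 ≤ (Φ.card : ℝ) := by exact_mod_cast card_pos.mpr ⟨p, hsupp p hp⟩
  calc probOf (liftDist A l0) R
      ≤ Real.exp (ε * maxCost d γ) * probOf (liftDist A l1) R + δ :=
        hXDP.probOf_liftDist_le hA hε hγ hsupp R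
    _ ≤ Real.exp (ε * Winf d l0 l1) * probOf (liftDist A l1) R + δ * Φ.card := by
        rw [hmax]
        gcongr
        exact le_mul_of_one_le_right hδ0 hcard

/-- (ε,d,δ)-XDP w.r.t. Φ implies (ε, W∞, δ·|Φ|)-XDistP w.r.t. Φ#∞. -/
theorem xdp_implies_xdistP {X Y : Type*} [Fintype X] [Fintype Y] [Nonempty X] [Nonempty Y]
    (d : X → X → ℝ) (hd : IsMetric d)
    (ε δ : ℝ) (hε : 0 ≤ ε) (hδ0 : 0 ≤ δ) (hδ1 : δ ≤ 1)
    (Φ : Finset (X × X)) (A : X → Y → ℝ) (hA : IsMech A)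
    (hXDP : XDP A Φ ε d δ) :
    XDistP A (liftRelInf d Φ) ε (Winf d) (δ * (Φ.card : ℝ)) :=
  xdp_implies_xdistP_general d ε δ hε hδ0 Φ A hA hXDP
end

section
/- Let X and Y be finite nonempty sets, ε ≥ 0, c ≥ 0, and d a pseudometric on the set of probability distributions on X. Suppose a mechanism A : X → D(Y) provides (ε,d,0)-extended distribution privacy with respect to all pairs of distributions on X. Let λ0, λ1, λ̃0, λ̃1 be distributions on X with d(λ0, λ̃0) ≤ c and d(λ1, λ̃1) ≤ c. Then for all R ⊆ Y, A#(λ̃0)[R] ≤ e^{ε·(d(λ0,λ1) + 2c)}·A#(λ̃1)[R]. -/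
/-- XDistP guarantee for attackers with (c,d)-close beliefs. -/
theorem xdistP_close_beliefs {X Y : Type*} [Fintype X] [Fintype Y] [Nonempty X] [Nonempty Y]
    (ε c : ℝ) (hε : 0 ≤ ε) (hc : 0 ≤ c)
    (D : (X → ℝ) → (X → ℝ) → ℝ)
    (hD0 : ∀ l l', 0 ≤ D l l') (hDsymm : ∀ l l', D l l' = D l' l)
    (hDrefl : ∀ l, D l l = 0)
    (hDtri : ∀ l l' l'', D l l'' ≤ D l l' + D l' l'')
    (A : X → Y → ℝ) (hA : IsMech A)
    (hXDistP : XDistP A (fun l l' => IsDist l ∧ IsDist l') ε D 0)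
    (l0 l1 t0 t1 : X → ℝ)
    (h0 : IsDist l0) (h1 : IsDist l1) (ht0 : IsDist t0) (ht1 : IsDist t1)
    (hc0 : D l0 t0 ≤ c) (hc1 : D l1 t1 ≤ c) :
    ∀ R : Finset Y, probOf (liftDist A t0) R ≤
      Real.exp (ε * (D l0 l1 + 2 * c)) * probOf (liftDist A t1) R := by
  intro R
  have hbase := hXDistP t0 t1 ⟨ht0, ht1⟩ R
  rw [add_zero] at hbase
  have hP : 0 ≤ probOf (liftDist A t1) R := by
    apply Finset.sum_nonneg
    intro y _
    apply Finset.sum_nonneg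
    intro x _
    exact mul_nonneg (ht1.1 x) ((hA x).1 y)
  have hd : D t0 t1 ≤ D l0 l1 + 2 * c := by
    have := hDtri t0 l0 t1
    have := hDtri l0 l1 t1
    have e0 : D t0 l0 = D l0 t0 := hDsymm _ _
    have e1 : D l1 t1 = D l1 t1 := rfl
    linarith
  calc probOf (liftDist A t0) R ≤ Real.exp (ε * D t0 t1) * probOf (liftDist A t1) R := hbase
    _ ≤ Real.exp (ε * (D l0 l1 + 2 * c)) * probOf (liftDist A t1) R := by
        apply mul_le_mul_of_nonneg_right _ hP
        exact Real.exp_le_exp.mpr (mul_le_mul_of_nonneg_left hd hε)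
end

section
/- Let X and Y be finite nonempty sets, d a metric on X, ε ≥ 0, δ ∈ [0,1], and Φ ⊆ X×X. If a mechanism A : X → D(Y) provides (ε, W∞, δ)-extended distribution privacy with respect to the relation Φ#∞ (where W∞ is the ∞-Wasserstein metric with respect to d), then A provides (ε, d, δ)-extended differential privacy with respect to Φ; that is, for all (x0,x1) ∈ Φ and all R ⊆ Y, A(x0)[R] ≤ e^{ε·d(x0,x1)}·A(x1)[R] + δ. -/
section PointAux
set_option linter.unusedSectionVars false
variable {X : Type*} [Fintype X] [DecidableEq X]
lemma pointDist_isDist (x : X) : IsDist (pointDist x) := by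
  constructor
  · intro x'; unfold pointDist; split <;> norm_num
  · simp [pointDist]

lemma coupling_point_unique (x0 x1 : X) (γ : X × X → ℝ)
    (hc : IsCoupling γ (pointDist x0) (pointDist x1)) :
    γ = pointDist (x0, x1) := by
  obtain ⟨⟨hnn, hsum⟩, hm0, hm1⟩ := hc
  have hz : ∀ p : X × X, p ≠ (x0, x1) → γ p = 0 := by
    rintro ⟨a, b⟩ hne
    by_cases ha : a = x0
    · have hb : b ≠ x1 := fun hb => hne (by rw [ha, hb])
      have := hm1 b
      simp [pointDist, hb] at this
      have h1 : ∀ a' ∈ Finset.univ, 0 ≤ γ (a', b) := fun a' _ => hnn _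
      exact (Finset.sum_eq_zero_iff_of_nonneg h1).mp this.symm a (Finset.mem_univ a)
    · have := hm0 a
      simp [pointDist, ha] at this
      have h1 : ∀ b' ∈ Finset.univ, 0 ≤ γ (a, b') := fun b' _ => hnn _
      exact (Finset.sum_eq_zero_iff_of_nonneg h1).mp this.symm b (Finset.mem_univ b)
  have hone : γ (x0, x1) = 1 := by
    rw [← hsum, Finset.sum_eq_single (x0, x1)]
    · intro p _ hp; exact hz p hp
    · simp
  funext p
  by_cases hp : p = (x0, x1)
  · rw [hp, hone]; simp [pointDist]
  · rw [hz p hp]; simp [pointDist, hp]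

lemma pointDist_coupling (x0 x1 : X) :
    IsCoupling (pointDist (x0, x1)) (pointDist x0) (pointDist x1) := by
  refine ⟨pointDist_isDist _, ?_, ?_⟩
  · intro a
    by_cases ha : a = x0 <;> simp [pointDist, Prod.ext_iff, ha]
  · intro b
    by_cases hb : b = x1 <;> simp [pointDist, Prod.ext_iff, hb]

lemma maxCost_pointDist (d : X → X → ℝ) (x0 x1 : X) :
    maxCost d (pointDist (x0, x1)) = d x0 x1 := by
  have hset : {r | ∃ p : X × X, 0 < pointDist (x0, x1) p ∧ r = d p.1 p.2} = {d x0 x1} := by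
    ext r
    constructor
    · rintro ⟨p, hp, rfl⟩
      have : p = (x0, x1) := by
        by_contra hne
        simp [pointDist, hne] at hp
      rw [this]; rfl
    · rintro rfl
      exact ⟨(x0, x1), by simp [pointDist], rfl⟩
  rw [maxCost, hset, csSup_singleton]

lemma Winf_pointDist (d : X → X → ℝ) (x0 x1 : X) :
    Winf d (pointDist x0) (pointDist x1) = d x0 x1 := by
  have hset : {r | ∃ γ, IsCoupling γ (pointDist x0) (pointDist x1) ∧ maxCost d γ = r}
      = {d x0 x1} := by
    ext r
    constructor
    · rintro ⟨γ, hc, rfl⟩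
      rw [coupling_point_unique x0 x1 γ hc, maxCost_pointDist]; rfl
    · rintro rfl
      exact ⟨pointDist (x0, x1), pointDist_coupling x0 x1, maxCost_pointDist d x0 x1⟩
  rw [Winf, hset, csInf_singleton]
end PointAux

/-- (ε, W∞, δ)-XDistP w.r.t. Φ#∞ implies (ε,d,δ)-XDP w.r.t. Φ. -/
theorem xdistP_implies_xdp {X Y : Type*} [Fintype X] [Fintype Y] [Nonempty X] [Nonempty Y]
    (d : X → X → ℝ) (hd : IsMetric d)
    (ε δ : ℝ) (hε : 0 ≤ ε) (hδ0 : 0 ≤ δ) (hδ1 : δ ≤ 1)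
    (Φ : Finset (X × X)) (A : X → Y → ℝ) (hA : IsMech A)
    (h : XDistP A (liftRelInf d Φ) ε (Winf d) δ) :
    XDP A Φ ε d δ := by
    classical
  rintro ⟨x0, x1⟩ hp R
  have hrel : liftRelInf d Φ (pointDist x0) (pointDist x1) := by
    refine ⟨pointDist_isDist x0, pointDist_isDist x1,
      pointDist (x0, x1), pointDist_coupling x0 x1, ?_, ?_⟩
    · intro p hpos
      have hpe : p = (x0, x1) := by
        by_contra hne; simp [pointDist, hne] at hpos
      rwa [hpe]
    · rw [maxCost_pointDist, Winf_pointDist]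
  have key := h _ _ hrel R
  rw [Winf_pointDist] at key
  have e0 : probOf (liftDist A (pointDist x0)) R = probOf (A x0) R := by
    simp [probOf, liftDist, pointDist, ite_mul]
  have e1 : probOf (liftDist A (pointDist x1)) R = probOf (A x1) R := by
    simp [probOf, liftDist, pointDist, ite_mul]
  rw [e0, e1] at key
  exact key
end

section
/- Let X, Y, Z be finite nonempty sets, Ψ a relation on probability distributions over X, and D a nonnegative function on pairs of distributions over X. Let A0 : X → D(Y) and A1 : Y → D(Z) be mechanisms, and define (A1 ∘ A0)(x)[S] = ∑_{y∈Y} A0(x)[y]·A1(y)[S] for S ⊆ Z. If A0 provides (ε,D,δ)-extended distribution privacy with respect to Ψ, then A1 ∘ A0 provides (ε,D,δ)-extended distribution privacy with respect to Ψ. -/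
lemma triple_swap {X Y Z : Type*} [Fintype X] [Fintype Y] (R : Finset Z)
    (g : X → Y → Z → ℝ) :
    ∑ z ∈ R, ∑ x, ∑ y, g x y z = ∑ y, ∑ x, ∑ z ∈ R, g x y z := by
  rw [Finset.sum_comm]
  rw [show (∑ x, ∑ z ∈ R, ∑ y, g x y z) = ∑ x, ∑ y, ∑ z ∈ R, g x y z from
    Finset.sum_congr rfl fun x _ => Finset.sum_comm]
  exact Finset.sum_comm

/-- Key auxiliary lemma: expectation bound from set-wise bound. -/
lemma aux_exp_bound {Y : Type*} [Fintype Y] (mu0 mu1 f : Y → ℝ) (E d : ℝ)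
    (hf0 : ∀ y, 0 ≤ f y) (hf1 : ∀ y, f y ≤ 1)
    (hb : ∀ T : Finset Y, ∑ y ∈ T, mu0 y ≤ E * ∑ y ∈ T, mu1 y + d) :
    ∑ y, mu0 y * f y ≤ E * ∑ y, mu1 y * f y + d := by
  classical
  set T := Finset.univ.filter (fun y => E * mu1 y < mu0 y) with hT
  have key : ∑ y, (mu0 y - E * mu1 y) * f y ≤ d := by
    have h1 : ∑ y, (mu0 y - E * mu1 y) * f y ≤ ∑ y ∈ T, (mu0 y - E * mu1 y) * f y := by
      rw [← Finset.sum_filter_add_sum_filter_not Finset.univ (fun y => E * mu1 y < mu0 y)]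
      have h2 : ∑ y ∈ Finset.univ.filter (fun y => ¬ E * mu1 y < mu0 y),
          (mu0 y - E * mu1 y) * f y ≤ 0 := by
        apply Finset.sum_nonpos
        intro y hy
        simp only [Finset.mem_filter, not_lt] at hy
        exact mul_nonpos_of_nonpos_of_nonneg (by linarith [hy.2]) (hf0 y)
      linarith
    have h3 : ∑ y ∈ T, (mu0 y - E * mu1 y) * f y ≤ ∑ y ∈ T, (mu0 y - E * mu1 y) := by
      apply Finset.sum_le_sum
      intro y hy
      simp only [hT, Finset.mem_filter] at hy
      have : 0 ≤ mu0 y - E * mu1 y := by linarith [hy.2]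
      calc (mu0 y - E * mu1 y) * f y ≤ (mu0 y - E * mu1 y) * 1 :=
        mul_le_mul_of_nonneg_left (hf1 y) this
      _ = mu0 y - E * mu1 y := mul_one _
    have h4 : ∑ y ∈ T, (mu0 y - E * mu1 y) = ∑ y ∈ T, mu0 y - E * ∑ y ∈ T, mu1 y := by
      rw [Finset.sum_sub_distrib, Finset.mul_sum]
    have h5 := hb T
    linarith
  have heq : ∑ y, mu0 y * f y
      = ∑ y, (mu0 y - E * mu1 y) * f y + E * ∑ y, mu1 y * f y := by
    rw [Finset.mul_sum, ← Finset.sum_add_distrib]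
    apply Finset.sum_congr rfl
    intro y _
    ring
  linarith

/-- XDistP is preserved by post-processing. -/
theorem postProc_xdistP {X Y Z : Type*} [Fintype X] [Fintype Y] [Fintype Z]
    [Nonempty X] [Nonempty Y] [Nonempty Z]
    (ε δ : ℝ) (hε : 0 ≤ ε) (hδ0 : 0 ≤ δ) (hδ1 : δ ≤ 1)
    (Ψ : (X → ℝ) → (X → ℝ) → Prop) (hΨ : ∀ l l', Ψ l l' → IsDist l ∧ IsDist l')
    (D : (X → ℝ) → (X → ℝ) → ℝ) (hD : ∀ l l', 0 ≤ D l l')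
    (A0 : X → Y → ℝ) (hA0 : IsMech A0)
    (A1 : Y → Z → ℝ) (hA1 : IsMech A1)
    (h : XDistP A0 Ψ ε D δ) :
    XDistP (postProc A0 A1) Ψ ε D δ := by
  intro l0 l1 hl R
  have hd := hΨ l0 l1 hl
  set f : Y → ℝ := fun y => probOf (A1 y) R with hf
  have hswap : ∀ l : X → ℝ,
      probOf (liftDist (postProc A0 A1) l) R = ∑ y, liftDist A0 l y * f y := by
    intro l
    simp only [probOf, liftDist, postProc, hf, Finset.mul_sum, Finset.sum_mul]
    rw [triple_swap R (fun x y z => l x * (A0 x y * A1 y z))]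
    refine Finset.sum_congr rfl fun y _ => ?_
    rw [Finset.sum_comm]
    exact Finset.sum_congr rfl fun z _ => Finset.sum_congr rfl fun x _ => by ring
  rw [hswap l0, hswap l1]
  apply aux_exp_bound
  · intro y
    exact Finset.sum_nonneg fun z _ => (hA1 y).1 z
  · intro y
    have h1 : probOf (A1 y) R ≤ ∑ z, A1 y z :=
      Finset.sum_le_sum_of_subset_of_nonneg (Finset.subset_univ R)
        fun z _ _ => (hA1 y).1 z
    have h2 := (hA1 y).2
    simp only [hf]
    linarith
  · intro T
    exact h l0 l1 hl T
end

section
/- Let X and Y be finite nonempty sets, c a positive integer, ε ≥ 0, and Ψ a relation on probability distributions over X. Let T be a map from distributions over X to distributions over X that is (c,Ψ)-stable: for every (λ0,λ1) ∈ Ψ there exist distributions μ_0 = T(λ0), μ_1, …, μ_m = T(λ1) with m ≤ c and (μ_i, μ_{i+1}) ∈ Ψ for each 0 ≤ i < m. If a mechanism A : X → D(Y) provides (ε,0)-distribution privacy with respect to Ψ, then the composite map λ ↦ A#(T(λ)) provides (c·ε, 0)-distribution privacy with respect to Ψ: for every (λ0,λ1) ∈ Ψ and every R ⊆ Y, A#(T(λ0))[R]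 ≤ e^{c·ε}·A#(T(λ1))[R]. -/
/-- pre-processing by a (c,Ψ)-stable transformation. -/
theorem preProc_stable_distP {X Y : Type*} [Fintype X] [Fintype Y]
    [Nonempty X] [Nonempty Y]
    (c : ℕ) (hc : 0 < c) (ε : ℝ) (hε : 0 ≤ ε)
    (Ψ : (X → ℝ) → (X → ℝ) → Prop) (hΨ : ∀ l l', Ψ l l' → IsDist l ∧ IsDist l')
    (T : (X → ℝ) → (X → ℝ))
    (hT : ∀ l, IsDist l → IsDist (T l))
    (hstable : ∀ l0 l1, Ψ l0 l1 → ∃ m ≤ c, ∃ μ : ℕ → X → ℝ,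
      μ 0 = T l0 ∧ μ m = T l1 ∧ ∀ i < m, Ψ (μ i) (μ (i + 1)))
    (A : X → Y → ℝ) (hA : IsMech A)
    (h : DistP A Ψ ε 0) :
    ∀ l0 l1, Ψ l0 l1 → ∀ R : Finset Y,
      probOf (liftDist A (T l0)) R ≤
        Real.exp ((c : ℝ) * ε) * probOf (liftDist A (T l1)) R := by
  intro l0 l1 hl R
  obtain ⟨m, hm, μ, hμ0, hμm, hchain⟩ := hstable l0 l1 hl
  have key : ∀ n, (∀ i < n, Ψ (μ i) (μ (i + 1))) →
      probOf (liftDist A (μ 0)) R ≤ Real.exp ((n : ℝ) * ε) * probOf (liftDist A (μ n)) R := by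
    intro n
    induction n with
    | zero => intro _; simp
    | succ n ih =>
      intro hch
      have h1 := ih (fun i hi => hch i (Nat.lt_succ_of_lt hi))
      have h2 := h (μ n) (μ (n + 1)) (hch n (Nat.lt_succ_self n)) R
      rw [add_zero] at h2
      calc probOf (liftDist A (μ 0)) R
          ≤ Real.exp ((n : ℝ) * ε) * probOf (liftDist A (μ n)) R := h1
        _ ≤ Real.exp ((n : ℝ) * ε) * (Real.exp ε * probOf (liftDist A (μ (n + 1))) R) := by
            exact mul_le_mul_of_nonneg_left h2 (Real.exp_nonneg _)
        _ = Real.exp (((n : ℕ) + 1 : ℝ) * ε) * probOf (liftDist A (μ (n + 1))) R := by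
            rw [← mul_assoc, ← Real.exp_add]; ring_nf
        _ = Real.exp (((n + 1 : ℕ) : ℝ) * ε) * probOf (liftDist A (μ (n + 1))) R := by
            push_cast; ring_nf
  have hkey := key m hchain
  rw [hμ0, hμm] at hkey
  have hdist : IsDist (T l1) := hT l1 (hΨ l0 l1 hl).2
  have hnn : 0 ≤ probOf (liftDist A (T l1)) R := by
    apply Finset.sum_nonneg
    intro y _
    apply Finset.sum_nonneg
    intro x _
    exact mul_nonneg (hdist.1 x) ((hA x).1 y)
  refine hkey.trans (mul_le_mul_of_nonneg_right ?_ hnn)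
  exact Real.exp_le_exp.mpr (mul_le_mul_of_nonneg_right (by exact_mod_cast hm) hε)
end

section
/- Let X and Y be finite nonempty sets, c ≥ 0, ε ≥ 0, δ ∈ [0,1], and D a nonnegative function on pairs of probability distributions over X. Let T be a map from distributions over X to distributions over X that is (c,D)-stable: for all distributions λ0, λ1 on X, D(T(λ0), T(λ1)) ≤ c·D(λ0,λ1). If a mechanism A : X → D(Y) provides (ε,D,δ)-extended distribution privacy with respect to all pairs of distributions, then the composite map λ ↦ A#(T(λ)) provides (c·ε, D, δ)-extended distribution privacy: for all distributions λ0, λ1 on X and all R ⊆ Y, A#(T(λ0))[R] ≤ e^{c·ε·D(λ0,λ1)}·A#(T(λ1))[R] + δ. -/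
lemma probOf_nonneg {Y : Type*} {μ : Y → ℝ} (hμ : ∀ y, 0 ≤ μ y) (R : Finset Y) :
    0 ≤ probOf μ R :=
  Finset.sum_nonneg fun y _ => hμ y

lemma liftDist_nonneg {X Y : Type*} [Fintype X] [Fintype Y] {A : X → Y → ℝ} {l : X → ℝ}
    (hA : IsMech A) (hl : IsDist l) (y : Y) : 0 ≤ liftDist A l y :=
  Finset.sum_nonneg fun x _ => mul_nonneg (hl.1 x) ((hA x).1 y)

theorem preProc_stable_xdistP_general {X Y : Type*} [Fintype X] [Fintype Y]
    (c ε δ : ℝ) (hε : 0 ≤ ε)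
    (D : (X → ℝ) → (X → ℝ) → ℝ)
    (T : (X → ℝ) → (X → ℝ))
    (hT : ∀ l, IsDist l → IsDist (T l))
    (hstable : ∀ l0 l1, IsDist l0 → IsDist l1 → D (T l0) (T l1) ≤ c * D l0 l1)
    (A : X → Y → ℝ) (hA : IsMech A)
    (h : XDistP A (fun l l' => IsDist l ∧ IsDist l') ε D δ) :
    ∀ l0 l1, IsDist l0 → IsDist l1 → ∀ R : Finset Y,
      probOf (liftDist A (T l0)) R ≤
        Real.exp (c * ε * D l0 l1) * probOf (liftDist A (T l1)) R + δ := by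
  intro l0 l1 h0 h1 R
  have hexponent : ε * D (T l0) (T l1) ≤ c * ε * D l0 l1 :=
    calc ε * D (T l0) (T l1) ≤ ε * (c * D l0 l1) :=
          mul_le_mul_of_nonneg_left (hstable l0 l1 h0 h1) hε
      _ = c * ε * D l0 l1 := by ring
  calc probOf (liftDist A (T l0)) R
      ≤ Real.exp (ε * D (T l0) (T l1)) * probOf (liftDist A (T l1)) R + δ :=
        h (T l0) (T l1) ⟨hT l0 h0, hT l1 h1⟩ R
    _ ≤ Real.exp (c * ε * D l0 l1) * probOf (liftDist A (T l1)) R + δ := by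
        gcongr
        exact probOf_nonneg (liftDist_nonneg hA (hT l1 h1)) R

/-- pre-processing by a (c,D)-stable transformation. -/
theorem preProc_stable_xdistP {X Y : Type*} [Fintype X] [Fintype Y]
    [Nonempty X] [Nonempty Y]
    (c ε δ : ℝ) (hc : 0 ≤ c) (hε : 0 ≤ ε) (hδ0 : 0 ≤ δ) (hδ1 : δ ≤ 1)
    (D : (X → ℝ) → (X → ℝ) → ℝ) (hD : ∀ l l', 0 ≤ D l l')
    (T : (X → ℝ) → (X → ℝ))
    (hT : ∀ l, IsDist l → IsDist (T l))
    (hstable : ∀ l0 l1, IsDist l0 → IsDist l1 → D (T l0) (T l1) ≤ c * D l0 l1)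
    (A : X → Y → ℝ) (hA : IsMech A)
    (h : XDistP A (fun l l' => IsDist l ∧ IsDist l') ε D δ) :
    ∀ l0 l1, IsDist l0 → IsDist l1 → ∀ R : Finset Y,
      probOf (liftDist A (T l0)) R ≤
        Real.exp (c * ε * D l0 l1) * probOf (liftDist A (T l1)) R + δ :=
  preProc_stable_xdistP_general c ε δ hε D T hT hstable A hA h
end

section
/- Let X and Y be finite nonempty sets, ε ≥ 0, δ ∈ [0,1], and Ψ a relation on probability distributions over X. If a mechanism A : X → D(Y) provides (ε,δ)-probabilistic distribution privacy with respect to Ψ, then A provides (ε,δ)-distribution privacy with respect to Ψ. -/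
/-- (ε,δ)-pDistP implies (ε,δ)-DistP. -/
theorem pdistP_implies_distP {X Y : Type*} [Fintype X] [Fintype Y] [DecidableEq Y]
    [Nonempty X] [Nonempty Y]
    (ε δ : ℝ) (hε : 0 ≤ ε) (hδ0 : 0 ≤ δ) (hδ1 : δ ≤ 1)
    (Ψ : (X → ℝ) → (X → ℝ) → Prop) (hΨ : ∀ l l', Ψ l l' → IsDist l ∧ IsDist l')
    (A : X → Y → ℝ) (hA : IsMech A)
    (h : pDistP A Ψ ε δ) :
    DistP A Ψ ε δ := by
  intro l0 l1 hl R
  obtain ⟨R', h0, h1, hR⟩ := h l0 l1 hl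
  have hnn : ∀ (l : X → ℝ), IsDist l → ∀ y, 0 ≤ liftDist A l y := by
    intro l hld y
    exact Finset.sum_nonneg fun x _ => mul_nonneg (hld.1 x) ((hA x).1 y)
  obtain ⟨hd0, hd1⟩ := hΨ l0 l1 hl
  have key : probOf (liftDist A l0) R ≤ probOf (liftDist A l0) (R \ R') + probOf (liftDist A l0) R' := by
    unfold probOf
    rw [← Finset.sum_union (Finset.sdiff_disjoint)]
    exact Finset.sum_le_sum_of_subset_of_nonneg
      (fun y hy => Finset.mem_union.2 (by
        by_cases hy' : y ∈ R'
        · exact Or.inr hy'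
        · exact Or.inl (Finset.mem_sdiff.2 ⟨hy, hy'⟩)))
      (fun y _ _ => hnn l0 hd0 y)
  have mono : probOf (liftDist A l1) (R \ R') ≤ probOf (liftDist A l1) R :=
    Finset.sum_le_sum_of_subset_of_nonneg (Finset.sdiff_subset)
      (fun y _ _ => hnn l1 hd1 y)
  calc probOf (liftDist A l0) R
      ≤ probOf (liftDist A l0) (R \ R') + probOf (liftDist A l0) R' := key
    _ ≤ Real.exp ε * probOf (liftDist A l1) (R \ R') + δ := by
        have := (hR R).1
        linarith
    _ ≤ Real.exp ε * probOf (liftDist A l1) R + δ := by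
        have := Real.exp_pos ε
        nlinarith
end

section
/- Let X and Y be finite nonempty sets, k a positive integer, ν the uniform distribution on Y, and Φ ⊆ X×X. If a mechanism A : X → D(Y) provides (ε_A, 0)-differential privacy with respect to Φ, then the (k,ν,A)-tupling mechanism Q provides (ε_A, 0)-distribution privacy with respect to the lifted relation Φ#: for all (λ0,λ1) ∈ Φ# and all R ⊆ Y^{k+1}, Q#(λ0)[R] ≤ e^{ε_A}·Q#(λ1)[R]. -/
/-- if A provides (ε_A,0)-DP w.r.t. Φ, then the tupling mechanism
provides (ε_A,0)-DistP w.r.t. Φ#. -/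
theorem tupling_dp_distP {X Y : Type*} [Fintype X] [Fintype Y] [Nonempty X] [Nonempty Y]
    (k : ℕ) (hk : 0 < k) (εA : ℝ) (hε : 0 ≤ εA)
    (Φ : Finset (X × X)) (A : X → Y → ℝ) (hA : IsMech A)
    (hDP : DP A Φ εA 0) :
    DistP (tupling k (uniformDist Y) A) (liftRel Φ) εA 0 := by
  intro l0 l1 hrel R
  obtain ⟨hd0, hd1, γ, ⟨⟨⟨hγnn, hγsum⟩, hm0, hm1⟩, hsupp⟩⟩ := hrel
  set Q := tupling k (uniformDist Y) A with hQdef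
  -- pointwise DP for A
  have hpt : ∀ p ∈ Φ, ∀ y, A p.1 y ≤ Real.exp εA * A p.2 y := by
    intro p hp y
    have := hDP p hp {y}
    simpa [probOf] using this
  have hν : ∀ y : Y, 0 ≤ uniformDist Y y := by
    intro y; unfold uniformDist; positivity
  -- DP of the tupling mechanism
  have hQDP : ∀ p ∈ Φ, probOf (Q p.1) R ≤ Real.exp εA * probOf (Q p.2) R := by
    intro p hp
    unfold Q
    unfold probOf tupling
    rw [Finset.mul_sum]
    refine Finset.sum_le_sum fun yb _ => ?_
    rw [← mul_assoc, mul_comm (Real.exp εA), mul_assoc]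
    refine mul_le_mul_of_nonneg_left ?_ (by positivity)
    rw [Finset.mul_sum]
    refine Finset.sum_le_sum fun i _ => ?_
    rw [← mul_assoc]
    exact mul_le_mul_of_nonneg_right (hpt p hp (yb i))
      (Finset.prod_nonneg fun j _ => hν (yb j))
  have hQnn : ∀ x, 0 ≤ probOf (Q x) R := by
    intro x
    refine Finset.sum_nonneg fun yb _ => ?_
    unfold Q
    unfold tupling
    refine mul_nonneg (by positivity) (Finset.sum_nonneg fun i _ => ?_)
    exact mul_nonneg ((hA x).1 (yb i)) (Finset.prod_nonneg fun j _ => hν (yb j))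
  -- rewrite liftDist prob as a sum
  have key : ∀ l : X → ℝ, probOf (liftDist Q l) R = ∑ x, l x * probOf (Q x) R := by
    intro l
    unfold probOf liftDist
    rw [Finset.sum_comm]
    exact Finset.sum_congr rfl fun x _ => (Finset.mul_sum _ _ _).symm
  rw [key, key]
  have h0 : ∑ x, l0 x * probOf (Q x) R = ∑ p : X × X, γ p * probOf (Q p.1) R := by
    rw [Fintype.sum_prod_type]
    refine Finset.sum_congr rfl fun x _ => ?_
    rw [hm0 x, Finset.sum_mul]
  have h1 : ∑ p : X × X, γ p * probOf (Q p.2) R = ∑ x, l1 x * probOf (Q x) R :=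
    ((Fintype.sum_prod_type' (f := fun x0 x1 => γ (x0, x1) * probOf (Q x1) R)).trans
      Finset.sum_comm).trans
      (Finset.sum_congr rfl fun x _ => by rw [hm1 x, Finset.sum_mul])
  rw [h0, ← h1, add_zero, Finset.mul_sum]
  refine Finset.sum_le_sum fun p _ => ?_
  rcases lt_or_eq_of_le (hγnn p) with hpos | hzero
  · rw [← mul_assoc, mul_comm (Real.exp εA), mul_assoc]
    exact mul_le_mul_of_nonneg_left (hQDP p (hsupp p hpos)) (hγnn p)
  · rw [← hzero]; simp
end
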